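/- Fix ξ ∈ ℝ³ with |ξ| ≤ ε for some ε ∈ (0,1], θ ∈ [0,1], and b² > a² > 0. Let û solve û'' + a²|ξ|²û + (b²−a²)(ξ·û)ξ + |ξ|^{2θ}û' = 0 with energy E(t) = |û'(t)|² + a²|ξ|²|û(t)|² + (b²−a²)|ξ·û(t)|². Then there exists a constant c > 0, independent of ξ and of the data, such that E(t) ≤ 3 e^{−c|ξ|^{2max{1−θ, θ}} t} E(0) for all t ≥ 0. -/

import Mathlib

/-!
Write the equation as `u'' + A u + σ u' = 0` with `σ = |ξ|^(2θ)` and `A` the Lamé symbol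
`a²|ξ|² + (b² - a²) ξ ξᵀ`, a symmetric operator with `A ≥ a²|ξ|²`, and perturb the energy
`E = |u'|² + ⟨A u, u⟩` to `L = E + κ Re⟨u', u⟩` with `κ = min 1 a² · |ξ|^γ`. For `|ξ| ≤ 1` one has
`κ ≤ σ` and `κ σ ≤ a²|ξ|²`; Cauchy's inequality then gives `|L - E| ≤ E / 2` and
`L' ≤ -(κ / 3) L`, so by Gronwall `E(t) ≤ 2 L(t) ≤ 2 e^(-κt/3) L(0) ≤ 3 e^(-κt/3) E(0)`.
-/

open Set Real
open scoped InnerProductSpace ComplexConjugate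

theorem le_exp_mul_of_hasDerivWithinAt_le {f f' : ℝ → ℝ} {k : ℝ}
    (hf : ∀ t ∈ Ici (0 : ℝ), HasDerivWithinAt f (f' t) (Ici 0) t)
    (hbound : ∀ t ∈ Ici (0 : ℝ), f' t ≤ -k * f t) {t : ℝ} (ht : 0 ≤ t) :
    f t ≤ exp (-k * t) * f 0 := by
  have hcont : ContinuousOn f (Icc 0 t) := fun s hs =>
    (hf s hs.1).continuousWithinAt.mono Icc_subset_Ici_self
  have := le_gronwallBound_of_liminf_deriv_right_le hcont
    (fun s hs _ hr => ((hf s hs.1).mono (Ici_subset_Ici.2 hs.1)).liminf_right_slope_le hr)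
    (K := -k) (ε := 0) le_rfl (fun s hs => by simpa using hbound s hs.1) t ⟨ht, le_rfl⟩
  rwa [gronwallBound_ε0, sub_zero, mul_comm] at this

theorem hasDerivWithinAt_toLp {ι : Type*} [Fintype ι] {β : ι → Type*}
    [∀ i, NormedAddCommGroup (β i)] [∀ i, NormedSpace ℝ (β i)] (p : ENNReal) [Fact (1 ≤ p)]
    {f : ℝ → (i : ι) → β i} {f' : (i : ι) → β i} {s : Set ℝ} {t : ℝ}
    (hf : ∀ i, HasDerivWithinAt (fun x => f x i) (f' i) s t) :
    HasDerivWithinAt (fun x => WithLp.toLp p (f x)) (WithLp.toLp p f') s t :=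
  (PiLp.hasFDerivAt_toLp p (f t)).comp_hasDerivWithinAt t (hasDerivWithinAt_pi.2 hf)

namespace DampedWave

variable {F : Type*} [NormedAddCommGroup F] [InnerProductSpace ℝ F]

def energy (A : F →L[ℝ] F) (v w : F) : ℝ := ‖w‖ ^ 2 + ⟪A v, v⟫_ℝ

def lyapunov (A : F →L[ℝ] F) (κ : ℝ) (v w : F) : ℝ := energy A v w + κ * ⟪w, v⟫_ℝ

theorem abs_two_mul_inner_le (κ : ℝ) (v w : F) :
    |2 * κ * ⟪w, v⟫_ℝ| ≤ ‖w‖ ^ 2 + κ ^ 2 * ‖v‖ ^ 2 := by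
  have h₁ := norm_add_sq_real w (κ • v)
  have h₂ := norm_sub_sq_real w (κ • v)
  rw [inner_smul_right, norm_smul, mul_pow, Real.norm_eq_abs, sq_abs] at h₁ h₂
  rw [abs_le]
  constructor <;> nlinarith [sq_nonneg ‖w + κ • v‖, sq_nonneg ‖w - κ • v‖]

variable {A : F →L[ℝ] F} {m κ σ : ℝ}

theorem abs_lyapunov_sub_energy_le (hA : ∀ v, m * ‖v‖ ^ 2 ≤ ⟪A v, v⟫_ℝ) (hκ : κ ^ 2 ≤ m)
    (v w : F) : |lyapunov A κ v w - energy A v w| ≤ energy A v w / 2 := by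
  have hcross := abs_two_mul_inner_le κ v w
  rw [mul_assoc, abs_mul, abs_two] at hcross
  have hκv : κ ^ 2 * ‖v‖ ^ 2 ≤ m * ‖v‖ ^ 2 := by gcongr
  rw [lyapunov, add_sub_cancel_left, energy]
  linarith [hA v]

theorem lyapunov_dissipation (hA : ∀ v, m * ‖v‖ ^ 2 ≤ ⟪A v, v⟫_ℝ) (hκ₀ : 0 ≤ κ) (hκσ : κ ≤ σ)
    (hκm : κ * σ ≤ m) (v w : F) :
    -2 * σ * ‖w‖ ^ 2 + κ * (‖w‖ ^ 2 - ⟪A v, v⟫_ℝ - σ * ⟪w, v⟫_ℝ)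
      ≤ -(κ / 3) * lyapunov A κ v w := by
  have hκ2 : κ ^ 2 ≤ m := by nlinarith
  have hL := (abs_le.1 (abs_lyapunov_sub_energy_le hA hκ2 v w)).2
  have hcross := (abs_le.1 (abs_two_mul_inner_le κ v w)).1
  have hσ : 0 ≤ σ := hκ₀.trans hκσ
  have hσcross := mul_le_mul_of_nonneg_left hcross hσ
  have hσκ : σ * κ ^ 2 * ‖v‖ ^ 2 ≤ κ * ⟪A v, v⟫_ℝ := by
    calc σ * κ ^ 2 * ‖v‖ ^ 2 = κ * (κ * σ * ‖v‖ ^ 2) := by ring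
      _ ≤ κ * (m * ‖v‖ ^ 2) := by gcongr
      _ ≤ κ * ⟪A v, v⟫_ℝ := by gcongr; exact hA v
  unfold energy at hL
  nlinarith [sq_nonneg ‖w‖]

theorem hasDerivWithinAt_energy (hA : (A : F →ₗ[ℝ] F).IsSymmetric) {x y : ℝ → F} {x' y' : F}
    {s : Set ℝ} {t : ℝ} (hx : HasDerivWithinAt x x' s t) (hy : HasDerivWithinAt y y' s t) :
    HasDerivWithinAt (fun t => energy A (x t) (y t)) (2 * (⟪y t, y'⟫_ℝ + ⟪A (x t), x'⟫_ℝ)) s t := by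
  have hAx := (A.hasFDerivAt.comp_hasDerivWithinAt t hx).inner ℝ hx
  refine (hy.norm_sq.add hAx).congr_deriv ?_
  have : ⟪A x', x t⟫_ℝ = ⟪A (x t), x'⟫_ℝ := by
    rw [real_inner_comm]; exact (hA (x t) x').symm
  simp only [Function.comp_apply, this]
  ring

theorem hasDerivWithinAt_lyapunov (hA : (A : F →ₗ[ℝ] F).IsSymmetric) {u u' : ℝ → F} {u'' : F}
    {s : Set ℝ} {t : ℝ} (hu : HasDerivWithinAt u (u' t) s t) (hu' : HasDerivWithinAt u' u'' s t)
    (heq : u'' + A (u t) + σ • u' t = 0) :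
    HasDerivWithinAt (fun t => lyapunov A κ (u t) (u' t))
      (-2 * σ * ‖u' t‖ ^ 2 + κ * (‖u' t‖ ^ 2 - ⟪A (u t), u t⟫_ℝ - σ * ⟪u' t, u t⟫_ℝ)) s t := by
  have hu'' : u'' = -A (u t) - σ • u' t := by
    rw [← sub_eq_zero, ← heq]; abel
  refine ((hasDerivWithinAt_energy hA hu hu').add ((hu'.inner ℝ hu).const_mul κ)).congr_deriv ?_
  simp only [hu'', inner_sub_left, inner_sub_right, inner_neg_left, inner_neg_right,
    real_inner_smul_left, real_inner_smul_right, real_inner_self_eq_norm_sq,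
    real_inner_comm (u' t) (A (u t))]
  ring

theorem energy_le_three_mul_exp (hAs : (A : F →ₗ[ℝ] F).IsSymmetric)
    (hA : ∀ v, m * ‖v‖ ^ 2 ≤ ⟪A v, v⟫_ℝ) (hκ₀ : 0 ≤ κ) (hκσ : κ ≤ σ) (hκm : κ * σ ≤ m)
    {u u' u'' : ℝ → F} (hu : ∀ t ∈ Ici (0 : ℝ), HasDerivWithinAt u (u' t) (Ici 0) t)
    (hu' : ∀ t ∈ Ici (0 : ℝ), HasDerivWithinAt u' (u'' t) (Ici 0) t)
    (heq : ∀ t ∈ Ici (0 : ℝ), u'' t + A (u t) + σ • u' t = 0) {t : ℝ} (ht : 0 ≤ t) :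
    energy A (u t) (u' t) ≤ 3 * exp (-(κ / 3) * t) * energy A (u 0) (u' 0) := by
  have hκ2 : κ ^ 2 ≤ m := by nlinarith
  have hdecay := le_exp_mul_of_hasDerivWithinAt_le
    (fun s hs => hasDerivWithinAt_lyapunov hAs (hu s hs) (hu' s hs) (heq s hs))
    (fun _ _ => lyapunov_dissipation hA hκ₀ hκσ hκm _ _) ht
  have ht' := abs_le.1 (abs_lyapunov_sub_energy_le hA hκ2 (u t) (u' t))
  have h0 := abs_le.1 (abs_lyapunov_sub_energy_le hA hκ2 (u 0) (u' 0))
  calc energy A (u t) (u' t) ≤ 2 * lyapunov A κ (u t) (u' t) := by linarith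
    _ ≤ 2 * (exp (-(κ / 3) * t) * lyapunov A κ (u 0) (u' 0)) := by gcongr
    _ ≤ 2 * (exp (-(κ / 3) * t) * (3 / 2 * energy A (u 0) (u' 0))) := by gcongr; linarith
    _ = 3 * exp (-(κ / 3) * t) * energy A (u 0) (u' 0) := by ring

end DampedWave

section Lame

variable {ι : Type*} [Fintype ι]

theorem EuclideanSpace.real_inner_eq_re_inner (x y : EuclideanSpace ℂ ι) :
    ⟪x, y⟫_ℝ = (⟪x, y⟫_ℂ).re := by
  simp [PiLp.inner_apply, Complex.inner, Complex.re_sum, mul_comm]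

noncomputable def complexify (ξ : ι → ℝ) : EuclideanSpace ℂ ι := WithLp.toLp 2 fun j => (ξ j : ℂ)

theorem inner_complexify (ξ : ι → ℝ) (v : EuclideanSpace ℂ ι) :
    ⟪complexify ξ, v⟫_ℂ = ∑ j, (ξ j : ℂ) * v j := by
  simp [complexify, PiLp.inner_apply, mul_comm]

noncomputable def lameSymbol (a b : ℝ) (ξ : ι → ℝ) :
    EuclideanSpace ℂ ι →L[ℝ] EuclideanSpace ℂ ι :=
  (a ^ 2 * ∑ j, ξ j ^ 2) • ContinuousLinearMap.id ℝ _
    + (b ^ 2 - a ^ 2) • ((innerSL ℂ (complexify ξ)).smulRight (complexify ξ)).restrictScalars ℝ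

variable (a b : ℝ) (ξ : ι → ℝ)

theorem lameSymbol_apply (v : EuclideanSpace ℂ ι) (i : ι) :
    lameSymbol a b ξ v i = ((a ^ 2 * ∑ j, ξ j ^ 2 : ℝ) : ℂ) * v i
      + ((b ^ 2 - a ^ 2 : ℝ) : ℂ) * (∑ j, (ξ j : ℂ) * v j) * (ξ i : ℂ) := by
  simp only [lameSymbol, add_apply, smul_apply, ContinuousLinearMap.id_apply,
    ContinuousLinearMap.coe_restrictScalars', ContinuousLinearMap.smulRight_apply,
    innerSL_apply_apply, inner_complexify, PiLp.add_apply, PiLp.smul_apply, smul_eq_mul,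
    Complex.real_smul]
  simp only [complexify]
  ring

theorem real_inner_lameSymbol (v w : EuclideanSpace ℂ ι) :
    ⟪lameSymbol a b ξ v, w⟫_ℝ = (a ^ 2 * ∑ j, ξ j ^ 2) * ⟪v, w⟫_ℝ
      + (b ^ 2 - a ^ 2) * (conj ⟪complexify ξ, v⟫_ℂ * ⟪complexify ξ, w⟫_ℂ).re := by
  simp only [lameSymbol, add_apply, smul_apply, ContinuousLinearMap.id_apply,
    ContinuousLinearMap.coe_restrictScalars', ContinuousLinearMap.smulRight_apply,
    innerSL_apply_apply, inner_add_left, real_inner_smul_left]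
  rw [EuclideanSpace.real_inner_eq_re_inner (_ • _), inner_smul_left]

theorem lameSymbol_isSymmetric :
    (lameSymbol a b ξ : EuclideanSpace ℂ ι →ₗ[ℝ] EuclideanSpace ℂ ι).IsSymmetric := by
  intro v w
  rw [ContinuousLinearMap.coe_coe, real_inner_comm (lameSymbol a b ξ w) v, real_inner_lameSymbol,
    real_inner_lameSymbol, real_inner_comm v w, ← Complex.conj_re (_ * ⟪_, w⟫_ℂ), map_mul,
    Complex.conj_conj, mul_comm (starRingEnd ℂ _)]

theorem real_inner_lameSymbol_self (v : EuclideanSpace ℂ ι) :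
    ⟪lameSymbol a b ξ v, v⟫_ℝ = (a ^ 2 * ∑ j, ξ j ^ 2) * ‖v‖ ^ 2
      + (b ^ 2 - a ^ 2) * ‖∑ j, (ξ j : ℂ) * v j‖ ^ 2 := by
  rw [real_inner_lameSymbol, real_inner_self_eq_norm_sq, Complex.conj_mul', inner_complexify]
  norm_cast

theorem le_real_inner_lameSymbol_self (hab : a ^ 2 ≤ b ^ 2) (v : EuclideanSpace ℂ ι) :
    (a ^ 2 * ∑ j, ξ j ^ 2) * ‖v‖ ^ 2 ≤ ⟪lameSymbol a b ξ v, v⟫_ℝ := by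
  rw [real_inner_lameSymbol_self]
  have : 0 ≤ b ^ 2 - a ^ 2 := sub_nonneg.2 hab
  exact le_add_of_nonneg_right (by positivity)

theorem energy_lameSymbol_toLp (v w : ι → ℂ) :
    DampedWave.energy (lameSymbol a b ξ) (WithLp.toLp 2 v) (WithLp.toLp 2 w)
      = (∑ i, ‖w i‖ ^ 2) + a ^ 2 * (∑ j, ξ j ^ 2) * ∑ i, ‖v i‖ ^ 2
        + (b ^ 2 - a ^ 2) * ‖∑ j, (ξ j : ℂ) * v j‖ ^ 2 := by
  rw [DampedWave.energy, real_inner_lameSymbol_self, EuclideanSpace.norm_sq_eq,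
    EuclideanSpace.norm_sq_eq]
  ring

theorem toLp_add_lameSymbol_add_smul_eq_zero {σ : ℝ} {v v' v'' : ι → ℂ}
    (h : ∀ i, v'' i + ((a ^ 2 * ∑ j, ξ j ^ 2 : ℝ) : ℂ) * v i
      + ((b ^ 2 - a ^ 2 : ℝ) : ℂ) * (∑ j, (ξ j : ℂ) * v j) * (ξ i : ℂ) + (σ : ℂ) * v' i = 0) :
    WithLp.toLp 2 v'' + lameSymbol a b ξ (WithLp.toLp 2 v) + σ • WithLp.toLp 2 v' = 0 := by
  ext i
  simp only [PiLp.add_apply, PiLp.smul_apply, PiLp.zero_apply, lameSymbol_apply, Complex.real_smul]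
  rw [← h i]
  ring

end Lame

theorem rpow_two_mul_max_le {r θ : ℝ} (hr₀ : 0 ≤ r) (hr₁ : r ≤ 1) (hθ : 0 ≤ θ) :
    r ^ (2 * max (1 - θ) θ) ≤ r ^ (2 * θ) ∧ r ^ (2 * max (1 - θ) θ) * r ^ (2 * θ) ≤ r ^ 2 := by
  have h₁ := le_max_left (1 - θ) θ
  have h₂ := le_max_right (1 - θ) θ
  refine ⟨rpow_le_rpow_of_exponent_ge' hr₀ hr₁ (by positivity) (by linarith), ?_⟩
  rw [← rpow_add' hr₀ (by linarith), ← rpow_two]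
  exact rpow_le_rpow_of_exponent_ge' hr₀ hr₁ zero_le_two (by linarith)

theorem stmt6 (a b θ ε : ℝ) (ha : 0 < a ^ 2) (hab : a ^ 2 < b ^ 2)
    (hθ : θ ∈ Icc (0 : ℝ) 1) (hε : ε ∈ Ioc (0 : ℝ) 1) :
    ∃ c > (0 : ℝ), ∀ (ξ : Fin 3 → ℝ), Real.sqrt (∑ j, ξ j ^ 2) ≤ ε →
      ∀ (u u' u'' : ℝ → Fin 3 → ℂ),
      (∀ t ∈ Ici (0 : ℝ), ∀ i, HasDerivWithinAt (fun s => u s i) (u' t i) (Ici 0) t) →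
      (∀ t ∈ Ici (0 : ℝ), ∀ i, HasDerivWithinAt (fun s => u' s i) (u'' t i) (Ici 0) t) →
      (∀ t ∈ Ici (0 : ℝ), ∀ i,
        u'' t i + ((a ^ 2 * ∑ j, ξ j ^ 2 : ℝ) : ℂ) * u t i
          + ((b ^ 2 - a ^ 2 : ℝ) : ℂ) * (∑ j, (ξ j : ℂ) * u t j) * (ξ i : ℂ)
          + ((Real.sqrt (∑ j, ξ j ^ 2) ^ (2 * θ) : ℝ) : ℂ) * u' t i = 0) →
      let E : ℝ → ℝ := fun s =>
        (∑ i, ‖u' s i‖ ^ 2) + a ^ 2 * (∑ j, ξ j ^ 2) * ∑ i, ‖u s i‖ ^ 2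
          + (b ^ 2 - a ^ 2) * ‖∑ j, (ξ j : ℂ) * u s j‖ ^ 2
      ∀ t : ℝ, 0 ≤ t →
        E t ≤ 3 * Real.exp (-(c * Real.sqrt (∑ j, ξ j ^ 2) ^ (2 * max (1 - θ) θ) * t)) * E 0 := by
  refine ⟨min 1 (a ^ 2) / 3, by positivity, ?_⟩
  intro ξ hξ u u' u'' hu hu' heq E t ht
  obtain ⟨hqσ, hqσS⟩ := rpow_two_mul_max_le (sqrt_nonneg _) (hξ.trans hε.2) hθ.1
  rw [sq_sqrt (by positivity)] at hqσS
  have hκσ : min 1 (a ^ 2) * √(∑ j, ξ j ^ 2) ^ (2 * max (1 - θ) θ)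
      ≤ √(∑ j, ξ j ^ 2) ^ (2 * θ) :=
    (mul_le_of_le_one_left (by positivity) (min_le_left _ _)).trans hqσ
  have hκm : min 1 (a ^ 2) * √(∑ j, ξ j ^ 2) ^ (2 * max (1 - θ) θ) * √(∑ j, ξ j ^ 2) ^ (2 * θ)
      ≤ a ^ 2 * ∑ j, ξ j ^ 2 := by
    rw [mul_assoc]
    gcongr
    exact min_le_right _ _
  have key := DampedWave.energy_le_three_mul_exp (lameSymbol_isSymmetric a b ξ)
    (le_real_inner_lameSymbol_self a b ξ hab.le) (by positivity) hκσ hκm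
    (fun s hs => hasDerivWithinAt_toLp 2 (hu s hs)) (fun s hs => hasDerivWithinAt_toLp 2 (hu' s hs))
    (fun s hs => toLp_add_lameSymbol_add_smul_eq_zero a b ξ (heq s hs)) ht
  simp only [E, ← energy_lameSymbol_toLp]
  convert key using 4
  ring
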